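/- Let X, Y, Z be Banach spaces, γ₀ : Z → X and γ₁ : Z → Y continuous linear isomorphisms, ε₀, ε₁ ≠ 1 real numbers. Suppose every w ∈ Z decomposes uniquely as w = u + v with γ₁ applied to u interpreted as the full jump and the operators satisfy γ₀^{ε₀} w = (1-ε₀)γ₀ u + γ₀^{ε₀} v and γ₁^{ε₁} w = γ₁^{ε₁} u + (1-ε₁) γ₁ v as in equations (16)-(17). If the associated operator (1-ε₀)(1-ε₁)Φ - Ψ⁻¹ is an isomorphism, then for all admissible data (g₀, g₁) the system (16)-(17) has a unique solution (γ₁^{ε₁} u, γ₀^{ε₀} v), depending continuously on (g₀, g₁). -/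
import Mathlib


/-- Abstract Theorem 6.  With `X` (the trace space), `Y` (the
normal-derivative space), boundary operators `Φ : Y ≃ X` (normal-derivative jump
to trace) and `Ψ : X ≃ Y` (function jump to normal-derivative trace), reals
`ε₀ ε₁ ≠ 1`, if `T = (1-ε₀)(1-ε₁)Φ - Ψ⁻¹` is bijective then for all data
`(g₀, g₁)` the system (16)-(17)
`(1-ε₀)Φ a + b = g₀`, `a + (1-ε₁)Ψ b = g₁` (with `a = γ₁^{ε₁}u`, `b = γ₀^{ε₀}v`)
has a unique solution, depending linearly and continuously on `(g₀, g₁)`. -/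
theorem stmt12
    {X Y : Type*} [NormedAddCommGroup X] [NormedSpace ℝ X] [CompleteSpace X]
    [NormedAddCommGroup Y] [NormedSpace ℝ Y] [CompleteSpace Y]
    (Φ : Y ≃L[ℝ] X) (Ψ : X ≃L[ℝ] Y) (ε₀ ε₁ : ℝ) (hε₀ : ε₀ ≠ 1) (hε₁ : ε₁ ≠ 1)
    (T : Y →L[ℝ] X)
    (hT : T = ((1 - ε₀) * (1 - ε₁)) • (Φ : Y →L[ℝ] X) - (Ψ.symm : Y →L[ℝ] X))
    (hTbij : Function.Bijective T) :
    ∃ L : (X × Y) →L[ℝ] (Y × X), ∀ g₀ : X, ∀ g₁ : Y,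
      (∃! p : Y × X,
          (1 - ε₀) • Φ p.1 + p.2 = g₀ ∧ p.1 + (1 - ε₁) • Ψ p.2 = g₁) ∧
      (1 - ε₀) • Φ (L (g₀, g₁)).1 + (L (g₀, g₁)).2 = g₀ ∧
      (L (g₀, g₁)).1 + (1 - ε₁) • Ψ (L (g₀, g₁)).2 = g₁ := by

  -- `T` is a bijective continuous linear map between Banach spaces, hence an
  -- isomorphism by the open mapping theorem.
  set E : Y ≃L[ℝ] X := ContinuousLinearEquiv.ofBijective T
    (LinearMap.ker_eq_bot_of_injective hTbij.1)
    (LinearMap.range_eq_top.mpr hTbij.2) with hE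
  set A : Y ≃L[ℝ] Y := E.trans Ψ with hA
  have hAapp : ∀ y : Y, A y = ((1 - ε₀) * (1 - ε₁)) • Ψ (Φ y) - y := by
    intro y
    have hEy : E y = T y := rfl
    simp only [hA, ContinuousLinearEquiv.trans_apply, hEy, hT,
      ContinuousLinearMap.sub_apply, ContinuousLinearMap.smul_apply,
      ContinuousLinearMap.coe_coe, map_sub, map_smul,
      ContinuousLinearEquiv.apply_symm_apply, ContinuousLinearEquiv.coe_coe]
  -- the solution map
  set M : (X × Y) →L[ℝ] Y :=
    (1 - ε₁) • ((Ψ : X →L[ℝ] Y).comp (ContinuousLinearMap.fst ℝ X Y))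
      - ContinuousLinearMap.snd ℝ X Y with hM
  set a : (X × Y) →L[ℝ] Y := (A.symm : Y →L[ℝ] Y).comp M with ha
  set b : (X × Y) →L[ℝ] X :=
    ContinuousLinearMap.fst ℝ X Y - (1 - ε₀) • ((Φ : Y →L[ℝ] X).comp a) with hb
  refine ⟨a.prod b, fun g₀ g₁ => ?_⟩
  have haval : ∀ g₀ g₁, A (a (g₀, g₁)) = (1 - ε₁) • Ψ g₀ - g₁ := by
    intro g₀ g₁
    simp [ha, hM]
  have hbval : ∀ g₀ g₁, b (g₀, g₁) = g₀ - (1 - ε₀) • Φ (a (g₀, g₁)) := by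
    intro g₀ g₁; simp [hb]
  -- the pair (a, b) solves the system
  have hsol : ∀ g₀ g₁, (1 - ε₀) • Φ (a (g₀, g₁)) + b (g₀, g₁) = g₀ ∧
      a (g₀, g₁) + (1 - ε₁) • Ψ (b (g₀, g₁)) = g₁ := by
    intro g₀ g₁
    constructor
    · rw [hbval]; abel
    · have h1 := haval g₀ g₁
      rw [hAapp] at h1
      rw [hbval, map_sub, map_smul, smul_sub, smul_smul]
      have : ((1 - ε₁) * (1 - ε₀)) = ((1 - ε₀) * (1 - ε₁)) := by ring
      rw [this]
      have := sub_eq_iff_eq_add.mp h1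
      -- h1 : c • Ψ (Φ a) - a = (1-ε₁) • Ψ g₀ - g₁
      linear_combination (norm := abel) -h1
  refine ⟨⟨(a (g₀, g₁), b (g₀, g₁)), hsol g₀ g₁, ?_⟩, (hsol g₀ g₁).1, (hsol g₀ g₁).2⟩
  rintro ⟨p1, p2⟩ ⟨h1, h2⟩
  -- uniqueness
  have hp2 : p2 = g₀ - (1 - ε₀) • Φ p1 := by
    rw [← h1]; abel
  have hAp1 : A p1 = (1 - ε₁) • Ψ g₀ - g₁ := by
    rw [hAapp]
    rw [hp2] at h2
    rw [map_sub, map_smul, smul_sub, smul_smul] at h2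
    have : ((1 - ε₁) * (1 - ε₀)) = ((1 - ε₀) * (1 - ε₁)) := by ring
    rw [this] at h2
    linear_combination (norm := abel) -h2
  have hp1 : p1 = a (g₀, g₁) := by
    have := haval g₀ g₁
    have h := hAp1.trans this.symm
    exact A.injective h
  refine Prod.ext hp1 ?_
  rw [hp2, hp1, hbval]
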